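/- arXiv:2303.17229 — 2 statements merged into one kernel-verified Lean document; each statement's English description precedes it below -/
import Mathlib

section
/- Suppose f : ℝ^d → ℝ is bounded measurable with ‖f‖_∞ ≤ B and the noise variables are centered with |ε_i| ≤ σ almost surely. Then for every δ > 0 there exists a constant C > 0, depending only on δ, B and σ (not on n, x, p or k_n), such that P(|f̂(x) − b_n(f,x)| ≥ δ) ≤ 6·exp(−C·d_n(x)). -/
/-!
Given the sample, `f̂(x) - b_n(f,x)` is the ratio of the centred sum `∑ (Y_i - b) a(x, X_i)` to
the degree `∑ a(x, X_i)`. The summands are bounded by `2B + σ`, have mean zero (this is what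
`b_n(f,x)` is) and second moment at most `(2B + σ)² c_n(x)`, while the degree has mean
`d_n(x)`. A Bernstein-type Chernoff bound, from `exp t ≤ 1 + t + t²` for `|t| ≤ 1`, makes each
of the events "degree below `d_n(x)/2`", "centred sum above `δ d_n(x)/2`" and "centred sum
below `-δ d_n(x)/2`" of probability at most `exp(-C d_n(x))`, and outside them
`|f̂(x) - b_n(f,x)| < δ`.
-/

open MeasureTheory ProbabilityTheory Real Filter

section Chernoff

variable {Ω : Type*} [MeasurableSpace Ω] {ν : Measure Ω} [IsProbabilityMeasure ν] {g : Ω → ℝ}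
  {M : ℝ}

lemma integrable_pow_of_abs_le (hg : AEMeasurable g ν) (hgM : ∀ᵐ y ∂ν, |g y| ≤ M) (k : ℕ) :
    Integrable (fun y => g y ^ k) ν :=
  .of_bound (hg.pow_const k).aestronglyMeasurable (M ^ k) <| hgM.mono fun y hy => by
    simpa [abs_pow] using pow_le_pow_left₀ (abs_nonneg _) hy k

lemma integrable_exp_mul_of_abs_le (hg : AEMeasurable g ν) (hgM : ∀ᵐ y ∂ν, |g y| ≤ M) (l : ℝ) :
    Integrable (fun y => exp (l * g y)) ν :=
  .of_bound (hg.const_mul l).exp.aestronglyMeasurable (exp (|l| * M)) <| hgM.mono fun y hy => by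
    rw [norm_of_nonneg (exp_pos _).le, exp_le_exp]
    calc l * g y ≤ |l| * |g y| := (le_abs_self _).trans (abs_mul _ _).le
      _ ≤ |l| * M := by gcongr

lemma mgf_le_exp_of_abs_le (hg : AEMeasurable g ν) (hgM : ∀ᵐ y ∂ν, |g y| ≤ M) {l : ℝ}
    (hl : 0 ≤ l) (hlM : l * M ≤ 1) :
    mgf g ν l ≤ exp (l * ∫ y, g y ∂ν + l ^ 2 * ∫ y, g y ^ 2 ∂ν) := by
  have hg1 : Integrable g ν := by simpa using integrable_pow_of_abs_le hg hgM 1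
  have hg2 := integrable_pow_of_abs_le hg hgM 2
  have hquad : ∀ᵐ y ∂ν, exp (l * g y) ≤ 1 + l * g y + l ^ 2 * g y ^ 2 := by
    filter_upwards [hgM] with y hy
    have hly : |l * g y| ≤ 1 := by
      rw [abs_mul, abs_of_nonneg hl]
      exact (mul_le_mul_of_nonneg_left hy hl).trans hlM
    have := (abs_le.1 (abs_exp_sub_one_sub_id_le hly)).2
    linarith [mul_pow l (g y) 2]
  have hlin : Integrable (fun y => 1 + l * g y) ν := (integrable_const 1).add (hg1.const_mul l)
  have hsq : Integrable (fun y => l ^ 2 * g y ^ 2) ν := hg2.const_mul _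
  calc mgf g ν l ≤ ∫ y, (1 + l * g y + l ^ 2 * g y ^ 2) ∂ν :=
        integral_mono_ae (integrable_exp_mul_of_abs_le hg hgM l) (hlin.add hsq) hquad
    _ = (l * ∫ y, g y ∂ν + l ^ 2 * ∫ y, g y ^ 2 ∂ν) + 1 := by
        rw [integral_add hlin hsq, integral_add (integrable_const 1) (hg1.const_mul l),
          integral_const_mul, integral_const_mul]
        simp only [integral_const, probReal_univ, smul_eq_mul, mul_one]
        ring
    _ ≤ _ := add_one_le_exp _

variable {ι : Type*} [Fintype ι]

lemma pi_real_sum_ge_le_exp_mul_mgf_pow {l : ℝ} (hint : Integrable (fun y => exp (l * g y)) ν)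
    (hl : 0 ≤ l) (t : ℝ) :
    (Measure.pi fun _ : ι => ν).real {v | t ≤ ∑ i, g (v i)}
      ≤ exp (-l * t) * mgf g ν l ^ Fintype.card ι := by
  have hprod : ∀ v : ι → Ω, exp (l * ∑ i, g (v i)) = ∏ i, exp (l * g (v i)) := fun v => by
    rw [Finset.mul_sum, exp_sum]
  have hint_pi :
      Integrable (fun v : ι → Ω => exp (l * ∑ i, g (v i))) (Measure.pi fun _ => ν) := by
    simp_rw [hprod]
    exact Integrable.fintype_prod fun _ => hint
  convert measure_ge_le_exp_mul_mgf t hl hint_pi using 2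
  simp_rw [mgf, hprod]
  exact (integral_fintype_prod_eq_pow _).symm

theorem pi_real_sum_ge_le_exp_of_abs_le (hg : AEMeasurable g ν) (hgM : ∀ᵐ y ∂ν, |g y| ≤ M)
    (hM : 1 ≤ M) {η c t : ℝ} (hη : 0 ≤ η) (hη1 : η ≤ 1) (hsq : ∫ y, g y ^ 2 ∂ν ≤ M ^ 2 * c)
    (ht : Fintype.card ι * (∫ y, g y ∂ν + η * c / 2) ≤ t) :
    (Measure.pi fun _ : ι => ν).real {v | t ≤ ∑ i, g (v i)}
      ≤ exp (-(η ^ 2 / (16 * M ^ 2)) * (Fintype.card ι * c)) := by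
  set l := η / (4 * M ^ 2) with hl_def
  have hM0 : 0 < M := by linarith
  have hl : 0 ≤ l := by positivity
  have hlM : l * M ≤ 1 := by
    rw [hl_def, div_mul_eq_mul_div, div_le_one (by positivity)]
    nlinarith
  set N : ℝ := (Fintype.card ι : ℝ)
  have hN : 0 ≤ N := Nat.cast_nonneg _
  refine (pi_real_sum_ge_le_exp_mul_mgf_pow (integrable_exp_mul_of_abs_le hg hgM l) hl t).trans ?_
  calc exp (-l * t) * mgf g ν l ^ Fintype.card ι
      ≤ exp (-l * t) * exp (l * ∫ y, g y ∂ν + l ^ 2 * ∫ y, g y ^ 2 ∂ν) ^ Fintype.card ι := by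
        gcongr
        · exact mgf_nonneg
        · exact mgf_le_exp_of_abs_le hg hgM hl hlM
    _ = exp (-l * t + N * (l * ∫ y, g y ∂ν + l ^ 2 * ∫ y, g y ^ 2 ∂ν)) := by
        rw [← exp_nat_mul, ← exp_add]
    _ ≤ _ := by
        gcongr
        have hl2 : l ^ 2 * M ^ 2 * (N * c) = η ^ 2 / (16 * M ^ 2) * (N * c) := by
          rw [hl_def]; field_simp; ring
        have hlη : l * η * (N * c) = 4 * (η ^ 2 / (16 * M ^ 2)) * (N * c) := by
          rw [hl_def]; field_simp; ring
        linarith [mul_le_mul_of_nonneg_left ht hl,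
          mul_le_mul_of_nonneg_left (mul_le_mul_of_nonneg_left hsq (sq_nonneg l)) hN]

end Chernoff

lemma measureReal_restrict_Icc_Iic {t : ℝ} (ht : t ∈ Set.Icc (0 : ℝ) 1) :
    (volume.restrict (Set.Icc (0 : ℝ) 1)).real (Set.Iic t) = t := by
  have : Set.Iic t ∩ Set.Icc 0 1 = Set.Icc 0 t := by
    ext u; simp only [Set.mem_inter_iff, Set.mem_Iic, Set.mem_Icc]; grind
  rw [measureReal_restrict_apply measurableSet_Iic, this]
  simp [ht.1]

lemma integral_withDensity_ofReal {α : Type*} [MeasurableSpace α] {μ : Measure α} {p : α → ℝ}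
    (hp : ∀ z, 0 ≤ p z) (hpm : Measurable p) (g : α → ℝ) :
    ∫ z, g z ∂μ.withDensity (fun z => ENNReal.ofReal (p z)) = ∫ z, g z * p z ∂μ := by
  rw [integral_withDensity_eq_integral_toReal_smul hpm.ennreal_ofReal
    (ae_of_all _ fun _ => ENNReal.ofReal_lt_top)]
  simp_rw [ENNReal.toReal_ofReal (hp _), smul_eq_mul, mul_comm]

lemma integrable_of_mem_Icc {α : Type*} [MeasurableSpace α] {μ : Measure α} [IsFiniteMeasure μ]
    {κ : α → ℝ} (hκm : Measurable κ) (hκ : ∀ z, κ z ∈ Set.Icc (0 : ℝ) 1) : Integrable κ μ :=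
  .of_bound hκm.aestronglyMeasurable 1 (ae_of_all _ fun z => by
    simpa [abs_le] using ⟨(hκ z).1.trans' (by norm_num), (hκ z).2⟩)

lemma abs_integral_mul_div_integral_le {α : Type*} [MeasurableSpace α] {μ : Measure α}
    {f κ : α → ℝ} {B : ℝ} (hκ : Integrable κ μ) (hκ0 : ∀ z, 0 ≤ κ z) (hc : 0 < ∫ z, κ z ∂μ)
    (hfB : ∀ z, |f z| ≤ B) :
    |(∫ z, f z * κ z ∂μ) / ∫ z, κ z ∂μ| ≤ B := by
  rw [abs_div, abs_of_pos hc, div_le_iff₀ hc, ← integral_const_mul B κ, ← Real.norm_eq_abs]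
  refine norm_integral_le_of_norm_le (hκ.const_mul B) (ae_of_all _ fun z => ?_)
  rw [norm_mul, Real.norm_eq_abs, Real.norm_eq_abs, abs_of_nonneg (hκ0 z)]
  exact mul_le_mul_of_nonneg_right (hfB z) (hκ0 z)

lemma sum_le_half_or_of_le_abs_weighted_mean_sub {ι : Type*} [Fintype ι] {a y : ι → ℝ}
    {b δ N : ℝ} (hN : 0 ≤ N) (hδ : 0 ≤ δ)
    (h : δ ≤ |(if 0 < ∑ i, a i then (∑ i, y i * a i) / ∑ i, a i else 0) - b|) :
    ∑ i, a i ≤ N / 2 ∨ δ * N / 2 ≤ ∑ i, (y i - b) * a i ∨ δ * N / 2 ≤ -∑ i, (y i - b) * a i := by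
  refine or_iff_not_imp_left.2 fun hlarge => le_abs.1 ?_
  push Not at hlarge
  have hpos : 0 < ∑ i, a i := by linarith
  rw [if_pos hpos] at h
  have hsum : ∑ i, (y i - b) * a i = ((∑ i, y i * a i) / ∑ i, a i - b) * ∑ i, a i := by
    simp only [sub_mul, Finset.sum_sub_distrib, ← Finset.mul_sum]
    field_simp
  rw [hsum, abs_mul, abs_of_pos hpos]
  nlinarith

section GraphicalNadarayaWatson

variable {E : Type*}

/-- The edge `a(x, X)` of a sample `v = (X, U, ε)`, where `κ = k_n(x, ·)`. -/
noncomputable def edgeIndicator (κ : E → ℝ) (v : E × ℝ × ℝ) : ℝ := if v.2.1 ≤ κ v.1 then 1 else 0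

noncomputable def gnwEstimator {ι : Type*} [Fintype ι] (κ f : E → ℝ) (v : ι → E × ℝ × ℝ) : ℝ :=
  if 0 < ∑ i, edgeIndicator κ (v i) then
    (∑ i, (f (v i).1 + (v i).2.2) * edgeIndicator κ (v i)) / ∑ i, edgeIndicator κ (v i)
  else 0

variable {κ : E → ℝ}

lemma edgeIndicator_eq_zero_or_one (v : E × ℝ × ℝ) :
    edgeIndicator κ v = 0 ∨ edgeIndicator κ v = 1 := by
  unfold edgeIndicator; split_ifs <;> simp

lemma abs_edgeIndicator_le_one (v : E × ℝ × ℝ) : |edgeIndicator κ v| ≤ 1 := by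
  rcases edgeIndicator_eq_zero_or_one (κ := κ) v with h | h <;> simp [h]

lemma setOf_le_abs_gnwEstimator_sub_subset {ι : Type*} [Fintype ι] {f : E → ℝ} {b δ c : ℝ}
    (hδ : 0 ≤ δ) (hc : 0 ≤ Fintype.card ι * c) :
    {v : ι → E × ℝ × ℝ | δ ≤ |gnwEstimator κ f v - b|}
      ⊆ ({v | ∑ i, edgeIndicator κ (v i) ≤ Fintype.card ι * c / 2}
        ∪ {v | δ * (Fintype.card ι * c) / 2
            ≤ ∑ i, (f (v i).1 + (v i).2.2 - b) * edgeIndicator κ (v i)})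
        ∪ {v | δ * (Fintype.card ι * c) / 2
            ≤ ∑ i, -((f (v i).1 + (v i).2.2 - b) * edgeIndicator κ (v i))} := by
  intro v hv
  rcases sum_le_half_or_of_le_abs_weighted_mean_sub hc hδ hv with h | h | h
  · left; left; exact h
  · left; right; exact h
  · right; simpa [Finset.sum_neg_distrib] using h

variable [MeasurableSpace E]

lemma measurable_edgeIndicator (hκ : Measurable κ) : Measurable (edgeIndicator κ) :=
  Measurable.ite (measurableSet_le measurable_snd.fst (hκ.comp measurable_fst))
    measurable_const measurable_const

variable {μX : Measure E} {μU με : Measure ℝ}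

lemma ae_abs_label_sub_le {f : E → ℝ} {B σ b : ℝ} (hfB : ∀ z, |f z| ≤ B) (hbB : |b| ≤ B)
    (hεσ : ∀ᵐ e ∂με, |e| ≤ σ) :
    ∀ᵐ v ∂μX.prod (μU.prod με), |f v.1 + v.2.2 - b| ≤ 2 * B + σ := by
  filter_upwards [Measure.quasiMeasurePreserving_snd.ae
    (Measure.quasiMeasurePreserving_snd.ae hεσ)] with v hv
  calc |f v.1 + v.2.2 - b| ≤ |f v.1 + v.2.2| + |b| := abs_sub _ _
    _ ≤ |f v.1| + |v.2.2| + |b| := by gcongr; exact abs_add_le _ _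
    _ ≤ 2 * B + σ := by linarith [hfB v.1]

variable [IsProbabilityMeasure μX] [IsProbabilityMeasure μU] [IsProbabilityMeasure με]

lemma integral_mul_mul_edgeIndicator (hμU : ∀ t ∈ Set.Icc (0 : ℝ) 1, μU.real (Set.Iic t) = t)
    (hκ : ∀ z, κ z ∈ Set.Icc (0 : ℝ) 1) (hκm : Measurable κ) {F : E → ℝ} (hF : Integrable F μX)
    (G : ℝ → ℝ) :
    ∫ v, F v.1 * G v.2.2 * edgeIndicator κ v ∂μX.prod (μU.prod με)
      = (∫ z, F z * κ z ∂μX) * ∫ e, G e ∂με := by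
  set H : E × ℝ → ℝ := fun w => F w.1 * if w.2 ≤ κ w.1 then 1 else 0
  have hH : Integrable H (μX.prod μU) := by
    refine (hF.comp_fst μU).mul_bdd (c := 1) ?_ (ae_of_all _ fun w => ?_)
    · exact (Measurable.ite (measurableSet_le measurable_snd (hκm.comp measurable_fst))
        measurable_const measurable_const).aestronglyMeasurable
    · split_ifs <;> simp
  rw [← (measurePreserving_prodAssoc μX μU με).integral_comp']
  calc ∫ w, F (MeasurableEquiv.prodAssoc w).1 * G (MeasurableEquiv.prodAssoc w).2.2
        * edgeIndicator κ (MeasurableEquiv.prodAssoc w) ∂(μX.prod μU).prod με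
      = ∫ w, H w.1 * G w.2 ∂(μX.prod μU).prod με := by
        congr 1; ext ⟨⟨z, u⟩, e⟩
        change F z * G e * (if u ≤ κ z then 1 else 0) = (F z * if u ≤ κ z then 1 else 0) * G e
        ring
    _ = (∫ w, H w ∂μX.prod μU) * ∫ e, G e ∂με := integral_prod_mul _ _
    _ = _ := by
        rw [integral_prod _ hH]
        congr 1
        refine integral_congr_ae (ae_of_all _ fun z => ?_)
        have hind :
            (fun u : ℝ => if u ≤ κ z then (1 : ℝ) else 0) = (Set.Iic (κ z)).indicator 1 := by
          ext u; simp [Set.indicator_apply]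
        simp only [H]
        rw [integral_const_mul, hind, integral_indicator_one measurableSet_Iic, hμU _ (hκ z)]

lemma integral_edgeIndicator (hμU : ∀ t ∈ Set.Icc (0 : ℝ) 1, μU.real (Set.Iic t) = t)
    (hκ : ∀ z, κ z ∈ Set.Icc (0 : ℝ) 1) (hκm : Measurable κ) :
    ∫ v, edgeIndicator κ v ∂μX.prod (μU.prod με) = ∫ z, κ z ∂μX := by
  simpa using integral_mul_mul_edgeIndicator (με := με) hμU hκ hκm (integrable_const (1 : ℝ))
    fun _ => 1

lemma integral_label_sub_mul_edgeIndicator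
    (hμU : ∀ t ∈ Set.Icc (0 : ℝ) 1, μU.real (Set.Iic t) = t)
    (hκ : ∀ z, κ z ∈ Set.Icc (0 : ℝ) 1) (hκm : Measurable κ) {f : E → ℝ} {B b : ℝ}
    (hfm : Measurable f) (hfB : ∀ z, |f z| ≤ B) (hε : Integrable (fun e : ℝ => e) με)
    (hε0 : ∫ e, e ∂με = 0) (hc : ∫ z, κ z ∂μX ≠ 0)
    (hb : b = (∫ z, f z * κ z ∂μX) / ∫ z, κ z ∂μX) :
    ∫ v, (f v.1 + v.2.2 - b) * edgeIndicator κ v ∂μX.prod (μU.prod με) = 0 := by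
  have hκi : Integrable κ μX := integrable_of_mem_Icc hκm hκ
  have hfi : Integrable f μX :=
    .of_bound hfm.aestronglyMeasurable B (ae_of_all _ hfB)
  have hfκ : Integrable (fun z => f z * κ z) μX :=
    hκi.bdd_mul hfm.aestronglyMeasurable (ae_of_all _ hfB)
  have ha := measurable_edgeIndicator hκm
  have hlabel : Integrable (fun v : E × ℝ × ℝ => (f v.1 - b) * 1 * edgeIndicator κ v)
      (μX.prod (μU.prod με)) :=
    ((hfi.sub (integrable_const b)).comp_fst _).mul_const 1 |>.mul_bdd ha.aestronglyMeasurable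
      (c := 1) (ae_of_all _ abs_edgeIndicator_le_one)
  have hnoise : Integrable (fun v : E × ℝ × ℝ => 1 * v.2.2 * edgeIndicator κ v)
      (μX.prod (μU.prod με)) :=
    ((hε.comp_snd μU).comp_snd μX).const_mul 1 |>.mul_bdd ha.aestronglyMeasurable
      (c := 1) (ae_of_all _ abs_edgeIndicator_le_one)
  calc ∫ v, (f v.1 + v.2.2 - b) * edgeIndicator κ v ∂μX.prod (μU.prod με)
      = ∫ v, ((f v.1 - b) * 1 * edgeIndicator κ v + 1 * v.2.2 * edgeIndicator κ v)
          ∂μX.prod (μU.prod με) := by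
        congr 1; ext v; ring
    _ = (∫ z, f z * κ z ∂μX) - b * ∫ z, κ z ∂μX := by
        rw [integral_add hlabel hnoise,
          integral_mul_mul_edgeIndicator hμU hκ hκm (F := fun z => f z - b)
            (hfi.sub (integrable_const b)) fun _ => 1,
          integral_mul_mul_edgeIndicator hμU hκ hκm (F := fun _ => 1) (integrable_const 1)
            fun e => e, hε0]
        simp only [integral_const, probReal_univ, smul_eq_mul, mul_one, mul_zero, add_zero,
          sub_mul, one_mul]
        rw [integral_sub hfκ (hκi.const_mul b), integral_const_mul]
    _ = 0 := by
        rw [hb]; field_simp; ring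

lemma integral_sq_mul_edgeIndicator_le {ν : Measure (E × ℝ × ℝ)} [IsFiniteMeasure ν]
    (hκm : Measurable κ) {r : E × ℝ × ℝ → ℝ} {M : ℝ} (hr : ∀ᵐ v ∂ν, |r v| ≤ M) :
    ∫ v, (r v * edgeIndicator κ v) ^ 2 ∂ν ≤ M ^ 2 * ∫ v, edgeIndicator κ v ∂ν := by
  have ha : Integrable (edgeIndicator κ) ν :=
    .of_bound (measurable_edgeIndicator hκm).aestronglyMeasurable 1
      (ae_of_all _ abs_edgeIndicator_le_one)
  rw [← integral_const_mul]
  refine integral_mono_of_nonneg (ae_of_all _ fun v => sq_nonneg _) (ha.const_mul _)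
    (hr.mono fun v hv => ?_)
  rcases edgeIndicator_eq_zero_or_one (κ := κ) v with h | h
  · simp [h]
  · simpa [h, sq_abs] using pow_le_pow_left₀ (abs_nonneg _) hv 2

lemma pi_real_sum_edgeIndicator_le_half_le {ι : Type*} [Fintype ι]
    (hμU : ∀ t ∈ Set.Icc (0 : ℝ) 1, μU.real (Set.Iic t) = t)
    (hκ : ∀ z, κ z ∈ Set.Icc (0 : ℝ) 1) (hκm : Measurable κ) {η M : ℝ} (hM1 : 1 ≤ M)
    (hη : 0 ≤ η) (hη1 : η ≤ 1) :
    (Measure.pi fun _ : ι => μX.prod (μU.prod με)).real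
        {v | ∑ i, edgeIndicator κ (v i) ≤ Fintype.card ι * (∫ z, κ z ∂μX) / 2}
      ≤ exp (-(η ^ 2 / (16 * M ^ 2)) * (Fintype.card ι * ∫ z, κ z ∂μX)) := by
  have hac := integral_edgeIndicator (μX := μX) (με := με) hμU hκ hκm
  have hNc : 0 ≤ Fintype.card ι * ∫ z, κ z ∂μX :=
    mul_nonneg (Nat.cast_nonneg _) (integral_nonneg fun z => (hκ z).1)
  have hsq : ∫ v, (-edgeIndicator κ v) ^ 2 ∂μX.prod (μU.prod με) ≤ M ^ 2 * ∫ z, κ z ∂μX := by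
    simpa [hac] using integral_sq_mul_edgeIndicator_le (r := fun _ => -1) hκm
      (ae_of_all (μX.prod (μU.prod με)) fun _ => by simpa using hM1)
  refine Eq.trans_le ?_ (pi_real_sum_ge_le_exp_of_abs_le (g := fun v => -edgeIndicator κ v)
    (measurable_edgeIndicator hκm).neg.aemeasurable
    (ae_of_all _ fun v => (abs_neg _).trans_le ((abs_edgeIndicator_le_one v).trans hM1))
    hM1 hη hη1 hsq (t := -(Fintype.card ι * (∫ z, κ z ∂μX) / 2))
    (by rw [integral_neg, hac]; nlinarith [mul_le_mul_of_nonneg_right hη1 hNc]))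
  congr 1; ext v
  simp [Finset.sum_neg_distrib]

theorem pi_real_le_abs_gnwEstimator_sub_le {ι : Type*} [Fintype ι]
    (hμU : ∀ t ∈ Set.Icc (0 : ℝ) 1, μU.real (Set.Iic t) = t)
    (hκ : ∀ z, κ z ∈ Set.Icc (0 : ℝ) 1) (hκm : Measurable κ) {f : E → ℝ} {B σ b δ η M : ℝ}
    (hfm : Measurable f) (hfB : ∀ z, |f z| ≤ B) (hε : Integrable (fun e : ℝ => e) με)
    (hε0 : ∫ e, e ∂με = 0) (hεσ : ∀ᵐ e ∂με, |e| ≤ σ) (hc : 0 < ∫ z, κ z ∂μX)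
    (hb : b = (∫ z, f z * κ z ∂μX) / ∫ z, κ z ∂μX) (hM1 : 1 ≤ M) (hM : 2 * B + σ ≤ M)
    (hη : 0 ≤ η) (hη1 : η ≤ 1) (hηδ : η ≤ δ) :
    (Measure.pi fun _ : ι => μX.prod (μU.prod με)).real {v | δ ≤ |gnwEstimator κ f v - b|}
      ≤ 3 * exp (-(η ^ 2 / (16 * M ^ 2)) * (Fintype.card ι * ∫ z, κ z ∂μX)) := by
  set c := ∫ z, κ z ∂μX
  set N : ℝ := (Fintype.card ι : ℝ)
  set z : E × ℝ × ℝ → ℝ := fun v => (f v.1 + v.2.2 - b) * edgeIndicator κ v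
  have hNc : 0 ≤ N * c := mul_nonneg (Nat.cast_nonneg _) hc.le
  have ha := measurable_edgeIndicator hκm
  have hz : Measurable z := (((hfm.comp measurable_fst).add measurable_snd.snd).sub_const b).mul ha
  have hac : ∫ v, edgeIndicator κ v ∂μX.prod (μU.prod με) = c := integral_edgeIndicator hμU hκ hκm
  have hres : ∀ᵐ v ∂μX.prod (μU.prod με), |f v.1 + v.2.2 - b| ≤ M :=
    (ae_abs_label_sub_le hfB (hb ▸ abs_integral_mul_div_integral_le (integrable_of_mem_Icc hκm hκ)
      (fun z => (hκ z).1) hc hfB) hεσ).mono fun v hv => hv.trans hM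
  have hzM : ∀ᵐ v ∂μX.prod (μU.prod με), |z v| ≤ M := hres.mono fun v hv =>
    (abs_mul _ _).trans_le
      ((mul_le_of_le_one_right (abs_nonneg _) (abs_edgeIndicator_le_one v)).trans hv)
  have hz0 : ∫ v, z v ∂μX.prod (μU.prod με) = 0 :=
    integral_label_sub_mul_edgeIndicator hμU hκ hκm hfm hfB hε hε0 hc.ne' hb
  have hz2 : ∫ v, z v ^ 2 ∂μX.prod (μU.prod με) ≤ M ^ 2 * c :=
    hac ▸ integral_sq_mul_edgeIndicator_le hκm hres
  have hup : (Measure.pi fun _ : ι => μX.prod (μU.prod με)).real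
      {v | δ * (N * c) / 2 ≤ ∑ i, z (v i)} ≤ exp (-(η ^ 2 / (16 * M ^ 2)) * (N * c)) :=
    pi_real_sum_ge_le_exp_of_abs_le hz.aemeasurable hzM hM1 hη hη1 hz2 (by rw [hz0]; nlinarith)
  have hlow : (Measure.pi fun _ : ι => μX.prod (μU.prod με)).real
      {v | δ * (N * c) / 2 ≤ ∑ i, -z (v i)} ≤ exp (-(η ^ 2 / (16 * M ^ 2)) * (N * c)) :=
    pi_real_sum_ge_le_exp_of_abs_le (g := fun v => -z v) hz.neg.aemeasurable
      (hzM.mono fun v hv => (abs_neg (z v)).trans_le hv) hM1 hη hη1 (by simpa using hz2)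
      (by rw [integral_neg, hz0]; nlinarith)
  calc _ ≤ _ := measureReal_mono (setOf_le_abs_gnwEstimator_sub_subset (hη.trans hηδ) hNc)
    _ ≤ _ := (measureReal_union_le _ _).trans (add_le_add_left (measureReal_union_le _ _) _)
    _ ≤ _ := add_le_add_three
        (pi_real_sum_edgeIndicator_le_half_le hμU hκ hκm hM1 hη hη1) hup hlow
    _ = _ := by ring

end GraphicalNadarayaWatson

theorem stmt_3_general (B σ δ : ℝ) (hδ : 0 < δ) :
    ∃ C : ℝ, 0 < C ∧
      ∀ {n d : ℕ} {Ω : Type} [MeasurableSpace Ω]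
        (P : Measure Ω) [IsProbabilityMeasure P]
        (X : Fin n → Ω → EuclideanSpace ℝ (Fin d)) (U : Fin n → Ω → ℝ) (ε : Fin n → Ω → ℝ),
        (∀ i, Measurable (X i)) → (∀ i, Measurable (U i)) → (∀ i, Measurable (ε i)) →
      ∀ (p : EuclideanSpace ℝ (Fin d) → ℝ),
        (∀ z, 0 ≤ p z) → Measurable p → (∫ z, p z = 1) →
      ∀ (kn : EuclideanSpace ℝ (Fin d) → EuclideanSpace ℝ (Fin d) → ℝ),
        (∀ u v, kn u v ∈ Set.Icc (0 : ℝ) 1) → Measurable (Function.uncurry kn) →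
      ∀ (x : EuclideanSpace ℝ (Fin d))
        (μX : Measure (EuclideanSpace ℝ (Fin d))), IsProbabilityMeasure μX →
        μX = volume.withDensity (fun z => ENNReal.ofReal (p z)) →
      ∀ (μU : Measure ℝ), IsProbabilityMeasure μU →
        μU = volume.restrict (Set.Icc (0 : ℝ) 1) →
      ∀ (με : Measure ℝ), IsProbabilityMeasure με →
        Measure.map (fun ω => fun i : Fin n => (X i ω, U i ω, ε i ω)) P
          = Measure.pi (fun _ : Fin n => μX.prod (μU.prod με)) →
        Integrable (fun t : ℝ => t) με → (∫ t : ℝ, t ∂με = 0) →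
        (∀ᵐ t ∂με, |t| ≤ σ) →
      ∀ (A : Fin n → Ω → ℝ),
        (∀ i ω, A i ω = if U i ω ≤ kn x (X i ω) then 1 else 0) →
      ∀ (f : EuclideanSpace ℝ (Fin d) → ℝ), Measurable f → (∀ z, |f z| ≤ B) →
      ∀ (Y : Fin n → Ω → ℝ), (∀ i ω, Y i ω = f (X i ω) + ε i ω) →
      ∀ (fhat : Ω → ℝ),
        (∀ ω, fhat ω =
          if 0 < ∑ i, A i ω then (∑ i, Y i ω * A i ω) / (∑ i, A i ω) else 0) →
      ∀ (cnx dnx Tfx bnfx : ℝ),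
        cnx = (∫ z, kn x z * p z) → 0 < cnx → dnx = n * cnx →
        Tfx = (∫ z, f z * (kn x z * p z)) → bnfx = Tfx / cnx →
      (P {ω | δ ≤ |fhat ω - bnfx|}).toReal ≤ 6 * Real.exp (-C * dnx) := by
  set M := max 1 (2 * B + σ)
  set η := min δ 1
  refine ⟨η ^ 2 / (16 * M ^ 2), by positivity, ?_⟩
  intro n d Ω _ P _ X U ε hX hU hε p hp hpm _ kn hkn hknm x μX _ hμX μU _ hμU με _ hmap hεint
    hεmean hεσ A hA f hfm hfB Y hY fhat hfhat cnx dnx Tfx bnfx hcnx hcpos hdnx hT hb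
  set Φ : Ω → Fin n → EuclideanSpace ℝ (Fin d) × ℝ × ℝ := fun ω i => (X i ω, U i ω, ε i ω)
  have hΦ : Measurable Φ := measurable_pi_lambda _ fun i => (hX i).prodMk ((hU i).prodMk (hε i))
  have hκm : Measurable (kn x) := hknm.comp measurable_prodMk_left
  have hdens : ∀ g : EuclideanSpace ℝ (Fin d) → ℝ, ∫ z, g z ∂μX = ∫ z, g z * p z := fun g => by
    rw [hμX, integral_withDensity_ofReal hp hpm]
  have hc : cnx = ∫ z, kn x z ∂μX := by rw [hcnx, hdens]
  have hbμ : bnfx = (∫ z, f z * kn x z ∂μX) / ∫ z, kn x z ∂μX := by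
    rw [hb, hT, hc, hdens fun z => f z * kn x z]
    simp_rw [mul_assoc]
  have hevent : {ω | δ ≤ |fhat ω - bnfx|}
      = Φ ⁻¹' {v | δ ≤ |gnwEstimator (kn x) f v - bnfx|} := by
    ext ω; simp [Φ, hfhat, hA, hY, gnwEstimator, edgeIndicator]
  have hdev := pi_real_le_abs_gnwEstimator_sub_le (ι := Fin n) (μX := μX) (με := με)
    (fun t ht => hμU ▸ measureReal_restrict_Icc_Iic ht) (hkn x) hκm hfm hfB hεint hεmean hεσ
    (hc ▸ hcpos) hbμ (le_max_left _ _) (le_max_right _ _) (by positivity) (min_le_right _ _)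
    (min_le_left _ _)
  rw [Fintype.card_fin, ← hc, ← hdnx, ← hmap] at hdev
  calc (P {ω | δ ≤ |fhat ω - bnfx|}).toReal
      ≤ (P.map Φ).real {v | δ ≤ |gnwEstimator (kn x) f v - bnfx|} := by
        rw [hevent]
        exact ENNReal.toReal_mono (measure_ne_top _ _) (Measure.le_map_apply hΦ.aemeasurable _)
    _ ≤ 3 * exp (-(η ^ 2 / (16 * M ^ 2)) * dnx) := hdev
    _ ≤ 6 * exp (-(η ^ 2 / (16 * M ^ 2)) * dnx) := by
        linarith [exp_pos (-(η ^ 2 / (16 * M ^ 2)) * dnx)]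

/-- (Concentration of GNW.) If `‖f‖_∞ ≤ B` and the centered noise satisfies
`|ε_i| ≤ σ` a.s., then for every `δ > 0` there is a constant `C > 0` depending only on
`δ, B, σ` (not on `n`, `x`, `p` or `k_n`) with
`P(|f̂(x) − b_n(f,x)| ≥ δ) ≤ 6 exp(−C d_n(x))`. -/
theorem stmt_3 (B σ δ : ℝ) (hB : 0 ≤ B) (hσ : 0 ≤ σ) (hδ : 0 < δ) :
    ∃ C : ℝ, 0 < C ∧
      ∀ {n d : ℕ} {Ω : Type} [MeasurableSpace Ω]
        (P : Measure Ω) [IsProbabilityMeasure P]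
        (X : Fin n → Ω → EuclideanSpace ℝ (Fin d)) (U : Fin n → Ω → ℝ) (ε : Fin n → Ω → ℝ),
        (∀ i, Measurable (X i)) → (∀ i, Measurable (U i)) → (∀ i, Measurable (ε i)) →
      ∀ (p : EuclideanSpace ℝ (Fin d) → ℝ),
        (∀ z, 0 ≤ p z) → Measurable p → (∫ z, p z = 1) →
      ∀ (kn : EuclideanSpace ℝ (Fin d) → EuclideanSpace ℝ (Fin d) → ℝ),
        (∀ u v, kn u v ∈ Set.Icc (0 : ℝ) 1) → Measurable (Function.uncurry kn) →
      ∀ (x : EuclideanSpace ℝ (Fin d))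
        (μX : Measure (EuclideanSpace ℝ (Fin d))), IsProbabilityMeasure μX →
        μX = volume.withDensity (fun z => ENNReal.ofReal (p z)) →
      ∀ (μU : Measure ℝ), IsProbabilityMeasure μU →
        μU = volume.restrict (Set.Icc (0 : ℝ) 1) →
      ∀ (με : Measure ℝ), IsProbabilityMeasure με →
        Measure.map (fun ω => fun i : Fin n => (X i ω, U i ω, ε i ω)) P
          = Measure.pi (fun _ : Fin n => μX.prod (μU.prod με)) →
        Integrable (fun t : ℝ => t) με → (∫ t : ℝ, t ∂με = 0) →
        (∀ᵐ t ∂με, |t| ≤ σ) →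
      ∀ (A : Fin n → Ω → ℝ),
        (∀ i ω, A i ω = if U i ω ≤ kn x (X i ω) then 1 else 0) →
      ∀ (f : EuclideanSpace ℝ (Fin d) → ℝ), Measurable f → (∀ z, |f z| ≤ B) →
      ∀ (Y : Fin n → Ω → ℝ), (∀ i ω, Y i ω = f (X i ω) + ε i ω) →
      ∀ (fhat : Ω → ℝ),
        (∀ ω, fhat ω =
          if 0 < ∑ i, A i ω then (∑ i, Y i ω * A i ω) / (∑ i, A i ω) else 0) →
      ∀ (cnx dnx Tfx bnfx : ℝ),
        cnx = (∫ z, kn x z * p z) → 0 < cnx → dnx = n * cnx →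
        Tfx = (∫ z, f z * (kn x z * p z)) → bnfx = Tfx / cnx →
      (P {ω | δ ≤ |fhat ω - bnfx|}).toReal ≤ 6 * Real.exp (-C * dnx) :=
  stmt_3_general B σ δ hδ
end

section
/- Let g : ℝ^d × ℝ → ℝ be measurable with E[g(X_1,ε_1)²] < ∞, and set F_i = g(X_i,ε_i). Then for every pair of distinct indices i ≠ j in {1,…,n}, E[F_i F_j a(x,X_i) a(x,X_j) R_i(x) R_j(x)] = E[F_i a(x,X_i)]·E[F_j a(x,X_j)]·E[R_{{i,j}}(x)²]. -/
open MeasureTheory ProbabilityTheory Real Filter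

/-!
On the event `a(x,X_i) = a(x,X_j) = 1` both `R_i(x)` and `R_j(x)` equal `R_{i,j}(x)`, and off
it the integrand vanishes, so the integrand is `(F_i a_i) (F_j a_j) R_{i,j}(x)²`. The three
factors are functions of `(X_i,U_i,ε_i)`, of `(X_j,U_j,ε_j)` and of the remaining coordinates
respectively, hence independent, and the expectation factorises.
-/

open Finset

section invDegree

variable {ι : Type*} [Fintype ι] [DecidableEq ι]

/-- `R_I` of the paper, for the edge indicators `a`. -/
noncomputable def invDegree (a : ι → ℝ) (I : Finset ι) : ℝ :=
  1 / (#I + ∑ l ∈ Iᶜ, a l)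

theorem sum_compl_singleton_eq_add_sum_compl_pair {M : Type*} [AddCommMonoid M] (f : ι → M)
    {i j : ι} (hij : i ≠ j) : ∑ l ∈ {i}ᶜ, f l = f j + ∑ l ∈ {i, j}ᶜ, f l := by
  rw [← add_sum_erase _ _ (by simpa using hij.symm), pair_comm, ← compl_insert]

theorem invDegree_singleton_of_eq_one {a : ι → ℝ} {i j : ι} (hij : i ≠ j) (hj : a j = 1) :
    invDegree a {i} = invDegree a {i, j} := by
  rw [invDegree, invDegree, sum_compl_singleton_eq_add_sum_compl_pair a hij, hj,
    card_singleton, card_pair hij]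
  push_cast
  ring_nf

theorem invDegree_pair {a : ι → ℝ} {i j : ι} (hij : i ≠ j) :
    invDegree a {i, j} = 1 / (2 + ∑ l : ({i, j}ᶜ : Finset ι), a l) := by
  rw [invDegree, card_pair hij, sum_coe_sort]
  norm_num

theorem mul_mul_invDegree_singleton_mul_invDegree_singleton {a : ι → ℝ}
    (ha : ∀ l, a l = 0 ∨ a l = 1) {i j : ι} (hij : i ≠ j) :
    a i * a j * invDegree a {i} * invDegree a {j} = a i * a j * invDegree a {i, j} ^ 2 := by
  rcases ha i with hi | hi
  · simp [hi]
  rcases ha j with hj | hj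
  · simp [hj]
  rw [invDegree_singleton_of_eq_one hij hj, invDegree_singleton_of_eq_one hij.symm hi,
    pair_comm]
  ring

end invDegree

section independence

variable {Ω ι β : Type*} [MeasurableSpace Ω] {μ : Measure Ω} [Fintype ι] [MeasurableSpace β]

theorem iIndepFun_of_map_eq_pi [IsProbabilityMeasure μ] {Y : ι → Ω → β} (hY : ∀ i, Measurable (Y i))
    {ν : Measure β} [IsProbabilityMeasure ν]
    (hlaw : μ.map (fun ω i ↦ Y i ω) = Measure.pi fun _ ↦ ν) : iIndepFun Y μ := by
  have hmarg : ∀ i, μ.map (Y i) = ν := fun i ↦ by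
    rw [← (measurePreserving_eval (fun _ : ι ↦ ν) i).map_eq, ← hlaw,
      Measure.map_map (measurable_pi_apply i) (measurable_pi_lambda _ hY)]
    rfl
  rw [iIndepFun_iff_map_fun_eq_pi_map fun i ↦ (hY i).aemeasurable, hlaw]
  simp only [hmarg]

variable [DecidableEq ι]

theorem iIndepFun.integral_mul_mul_compl_pair {Y : ι → Ω → β} (hindep : iIndepFun Y μ)
    (hY : ∀ i, Measurable (Y i)) {i j : ι} (hij : i ≠ j) {φ ψ : β → ℝ}
    {χ : ((l : ({i, j}ᶜ : Finset ι)) → β) → ℝ} (hφ : Measurable φ) (hψ : Measurable ψ)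
    (hχ : Measurable χ) :
    ∫ ω, φ (Y i ω) * ψ (Y j ω) * χ (fun l ↦ Y l ω) ∂μ
      = (∫ ω, φ (Y i ω) ∂μ) * (∫ ω, ψ (Y j ω) ∂μ) * ∫ ω, χ (fun l ↦ Y l ω) ∂μ := by
  have hpair : IndepFun (fun ω ↦ φ (Y i ω) * ψ (Y j ω)) (fun ω ↦ χ (fun l ↦ Y l ω)) μ := by
    have hφψ : Measurable fun v : ({i, j} : Finset ι) → β ↦
        φ (v ⟨i, by simp⟩) * ψ (v ⟨j, by simp⟩) := by fun_prop
    exact (hindep.indepFun_finset {i, j} {i, j}ᶜ disjoint_compl_right hY).comp hφψ hχ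
  have hij' : IndepFun (fun ω ↦ φ (Y i ω)) (fun ω ↦ ψ (Y j ω)) μ :=
    (hindep.indepFun hij).comp hφ hψ
  have hφY := hφ.comp (hY i)
  have hψY := hψ.comp (hY j)
  have hχY := hχ.comp (measurable_pi_lambda _ fun l ↦ hY l)
  rw [hpair.integral_fun_mul_eq_mul_integral (hφY.mul hψY).aestronglyMeasurable
      hχY.aestronglyMeasurable,
    hij'.integral_fun_mul_eq_mul_integral hφY.aestronglyMeasurable hψY.aestronglyMeasurable]

end independence

theorem stmt_5_general
    {n d : ℕ} {Ω : Type} [MeasurableSpace Ω]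
    (P : Measure Ω) [IsProbabilityMeasure P]
    (X : Fin n → Ω → EuclideanSpace ℝ (Fin d)) (U : Fin n → Ω → ℝ) (ε : Fin n → Ω → ℝ)
    (hX : ∀ i, Measurable (X i)) (hU : ∀ i, Measurable (U i))
    (hε : ∀ i, Measurable (ε i))
    (kn : EuclideanSpace ℝ (Fin d) → EuclideanSpace ℝ (Fin d) → ℝ)
    (hkm : Measurable (Function.uncurry kn))
    (x : EuclideanSpace ℝ (Fin d))
    (μX : Measure (EuclideanSpace ℝ (Fin d))) (hμXP : IsProbabilityMeasure μX)
    (μU : Measure ℝ) (hμUP : IsProbabilityMeasure μU)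
    (με : Measure ℝ) (hμεP : IsProbabilityMeasure με)
    (hlaw : Measure.map (fun ω => fun i : Fin n => (X i ω, U i ω, ε i ω)) P
      = Measure.pi fun _ : Fin n => μX.prod (μU.prod με))
    (A : Fin n → Ω → ℝ)
    (hA : ∀ i ω, A i ω = if U i ω ≤ kn x (X i ω) then 1 else 0)
    (g : EuclideanSpace ℝ (Fin d) × ℝ → ℝ) (hg : Measurable g)
    (R : Finset (Fin n) → Ω → ℝ)
    (hR : ∀ (I : Finset (Fin n)), I.Nonempty → ∀ ω : Ω,
      R I ω = 1 / (I.card + ∑ j ∈ Iᶜ, A j ω)) :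
    ∀ i j : Fin n, i ≠ j →
      ∫ ω, g (X i ω, ε i ω) * g (X j ω, ε j ω) * A i ω * A j ω * R {i} ω * R {j} ω ∂P
        = (∫ ω, g (X i ω, ε i ω) * A i ω ∂P) * (∫ ω, g (X j ω, ε j ω) * A j ω ∂P)
            * ∫ ω, (R {i, j} ω) ^ 2 ∂P := by
  intro i j hij
  set Y : Fin n → Ω → _ := fun l ω ↦ (X l ω, U l ω, ε l ω)
  have hY : ∀ l, Measurable (Y l) := fun l ↦ by fun_prop
  let edge : EuclideanSpace ℝ (Fin d) × ℝ × ℝ → ℝ := fun v ↦ if v.2.1 ≤ kn x v.1 then 1 else 0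
  have hknx : Measurable (kn x) := hkm.comp measurable_prodMk_left
  have hedge : Measurable edge :=
    Measurable.ite (measurableSet_le (by fun_prop) (by fun_prop)) (by fun_prop) (by fun_prop)
  have hAY : ∀ l ω, A l ω = edge (Y l ω) := hA
  have hRI : ∀ I, I.Nonempty → ∀ ω, R I ω = invDegree (fun l ↦ A l ω) I := hR
  have hRij : ∀ ω, R {i, j} ω = 1 / (2 + ∑ l : ({i, j}ᶜ : Finset (Fin n)), edge (Y l ω)) :=
    fun ω ↦ by simp only [hRI _ (insert_nonempty _ _), invDegree_pair hij, hAY]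
  have hpt : ∀ ω, g (X i ω, ε i ω) * g (X j ω, ε j ω) * A i ω * A j ω * R {i} ω * R {j} ω
      = g (X i ω, ε i ω) * A i ω * (g (X j ω, ε j ω) * A j ω) * R {i, j} ω ^ 2 := fun ω ↦ by
    have h01 : ∀ l, A l ω = 0 ∨ A l ω = 1 := fun l ↦ by rw [hA]; split_ifs <;> simp
    rw [hRI _ (singleton_nonempty i), hRI _ (singleton_nonempty j), hRI _ (insert_nonempty _ _)]
    linear_combination g (X i ω, ε i ω) * g (X j ω, ε j ω) *
      mul_mul_invDegree_singleton_mul_invDegree_singleton h01 hij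
  simp_rw [hpt]
  simp only [hRij, hAY]
  exact iIndepFun.integral_mul_mul_compl_pair (iIndepFun_of_map_eq_pi hY hlaw) hY hij
    (φ := fun v ↦ g (v.1, v.2.2) * edge v) (ψ := fun v ↦ g (v.1, v.2.2) * edge v)
    (χ := fun v ↦ (1 / (2 + ∑ l, edge (v l))) ^ 2) (by fun_prop) (by fun_prop) (by fun_prop)

/-- For measurable `g` with `E[g(X_1,ε_1)²] < ∞`, `F_i = g(X_i,ε_i)` and
distinct `i ≠ j`,
`E[F_i F_j a_i a_j R_i(x) R_j(x)] = E[F_i a_i] E[F_j a_j] E[R_{i,j}(x)²]`. -/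
theorem stmt_5
    {n d : ℕ} {Ω : Type} [MeasurableSpace Ω]
    (P : Measure Ω) [IsProbabilityMeasure P]
    (X : Fin n → Ω → EuclideanSpace ℝ (Fin d)) (U : Fin n → Ω → ℝ) (ε : Fin n → Ω → ℝ)
    (hX : ∀ i, Measurable (X i)) (hU : ∀ i, Measurable (U i))
    (hε : ∀ i, Measurable (ε i))
    (p : EuclideanSpace ℝ (Fin d) → ℝ)
    (hp0 : ∀ z, 0 ≤ p z) (hpm : Measurable p) (hp1 : ∫ z, p z = 1)
    (kn : EuclideanSpace ℝ (Fin d) → EuclideanSpace ℝ (Fin d) → ℝ)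
    (hk01 : ∀ u v, kn u v ∈ Set.Icc (0 : ℝ) 1)
    (hkm : Measurable (Function.uncurry kn))
    (x : EuclideanSpace ℝ (Fin d))
    (μX : Measure (EuclideanSpace ℝ (Fin d))) (hμXP : IsProbabilityMeasure μX)
    (hμX : μX = volume.withDensity fun z => ENNReal.ofReal (p z))
    (μU : Measure ℝ) (hμUP : IsProbabilityMeasure μU)
    (hμU : μU = volume.restrict (Set.Icc (0 : ℝ) 1))
    (με : Measure ℝ) (hμεP : IsProbabilityMeasure με)
    (hlaw : Measure.map (fun ω => fun i : Fin n => (X i ω, U i ω, ε i ω)) P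
      = Measure.pi fun _ : Fin n => μX.prod (μU.prod με))
    (A : Fin n → Ω → ℝ)
    (hA : ∀ i ω, A i ω = if U i ω ≤ kn x (X i ω) then 1 else 0)
    (g : EuclideanSpace ℝ (Fin d) × ℝ → ℝ) (hg : Measurable g)
    (hg2 : ∀ i, Integrable (fun ω => (g (X i ω, ε i ω)) ^ 2) P)
    (R : Finset (Fin n) → Ω → ℝ)
    (hR : ∀ (I : Finset (Fin n)), I.Nonempty → ∀ ω : Ω,
      R I ω = 1 / (I.card + ∑ j ∈ Iᶜ, A j ω)) :
    ∀ i j : Fin n, i ≠ j →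
      ∫ ω, g (X i ω, ε i ω) * g (X j ω, ε j ω) * A i ω * A j ω * R {i} ω * R {j} ω ∂P
        = (∫ ω, g (X i ω, ε i ω) * A i ω ∂P) * (∫ ω, g (X j ω, ε j ω) * A j ω ∂P)
            * ∫ ω, (R {i, j} ω) ^ 2 ∂P :=
  stmt_5_general P X U ε hX hU hε kn hkm x μX hμXP μU hμUP με hμεP hlaw A hA g hg R hR
end
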